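/- arXiv:math/0104227 — 5 statements merged into one kernel-verified Lean document; each statement's English description precedes it below -/
import Mathlib

section
/- If a smooth path of symmetric matrices A(t) is given, then d/dt σ_k(A(t)) = T_{k-1}(A(t))^i_j · d/dt A(t)^j_i; that is, the derivative of σ_k at A in direction B equals the trace of T_{k-1}(A)·B. -/
open Finset Matrix

/-- The `k`-th elementary symmetric function of a vector in `ℝⁿ`. -/
noncomputable def esymmVec (n k : ℕ) (x : Fin n → ℝ) : ℝ :=
  ∑ s ∈ Finset.univ.powersetCard k, ∏ i ∈ s, x i

/-- `σ_k(A)`: the `k`-th elementary symmetric function of the eigenvalues of a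
symmetric (Hermitian) real matrix `A`. -/
noncomputable def sigmaM (n k : ℕ) (A : Matrix (Fin n) (Fin n) ℝ) : ℝ :=
  if h : A.IsHermitian then esymmVec n k h.eigenvalues else 0

/-- The `q`-th Newton transformation
`T_q(A) = σ_q(A)·I − σ_{q−1}(A)·A + ⋯ + (−1)^q A^q`. -/
noncomputable def newtonT (n q : ℕ) (A : Matrix (Fin n) (Fin n) ℝ) :
    Matrix (Fin n) (Fin n) ℝ :=
  ∑ j ∈ Finset.range (q + 1), ((-1 : ℝ) ^ j * sigmaM n (q - j) A) • A ^ j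

/-!
For symmetric `A`, `σ_k(A)` is `(-1)^k` times the coefficient of `X^(n-k)` in `χ_A`, and the
coefficients of a polynomial of degree at most `n` are fixed linear combinations of its values at
`n + 1` points. So it suffices to differentiate `χ_{A(t)}(s) = det(s - A(t))`, whose derivative is
`-tr(adj(s - A) B)` by Jacobi's formula. The Newton recursion `T_{q+1} = σ_{q+1} - A T_q` and
Cayley–Hamilton (`T_n = 0`) give `adj(s - A) = ∑_j (-1)^j s^(n-1-j) T_j(A)`, so the coefficient
of `s^(n-k)` in the derivative is `-(-1)^(k-1) tr(T_{k-1}(A) B)`.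
-/

open Polynomial

theorem Finset.sum_range_succ_pow_smul {R M : Type*} [CommSemiring R] [AddCommMonoid M]
    [Module R M] (s : R) (f : ℕ → M) (m : ℕ) :
    ∑ j ∈ range (m + 1), s ^ (m - j) • f j = s • ∑ j ∈ range m, s ^ (m - 1 - j) • f j + f m := by
  rw [sum_range_succ, Nat.sub_self, pow_zero, one_smul, smul_sum]
  congr 1
  refine sum_congr rfl fun j hj => ?_
  rw [smul_smul, ← pow_succ', show m - 1 - j + 1 = m - j by have := mem_range.mp hj; omega]

theorem Matrix.eval_charpoly_eq_det_smul_one_sub {R ι : Type*} [CommRing R] [Fintype ι]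
    [DecidableEq ι] (M : Matrix ι ι R) (s : R) : M.charpoly.eval s = (s • 1 - M).det := by
  rw [eval_charpoly, scalar_apply, smul_one_eq_diagonal]

theorem Matrix.det_updateCol_eq_sum_perm {R ι : Type*} [CommRing R] [Fintype ι]
    [DecidableEq ι] (M : Matrix ι ι R) (j : ι) (c : ι → R) :
    (M.updateCol j c).det = ∑ σ : Equiv.Perm ι,
      (Equiv.Perm.sign σ : R) * ((∏ i ∈ univ.erase j, M (σ i) i) * c (σ j)) := by
  rw [det_apply']
  refine sum_congr rfl fun σ _ => congrArg _ ?_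
  rw [← mul_prod_erase univ _ (mem_univ j), updateCol_self, mul_comm]
  congr 1
  exact prod_congr rfl fun i hi => updateCol_ne (ne_of_mem_erase hi)

section Calculus

variable {𝕜 : Type*} [NontriviallyNormedField 𝕜]

theorem Matrix.hasDerivAt_det {ι : Type*} [Fintype ι] [DecidableEq ι] {M : 𝕜 → Matrix ι ι 𝕜}
    {M' : Matrix ι ι 𝕜} {t₀ : 𝕜} (h : ∀ i j, HasDerivAt (fun t => M t i j) (M' i j) t₀) :
    HasDerivAt (fun t => (M t).det) ((M t₀).adjugate * M').trace t₀ := by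
  have htrace : ((M t₀).adjugate * M').trace = ∑ j, ((M t₀).updateCol j (fun i => M' i j)).det :=
    sum_congr rfl fun j _ => by
      rw [← cramer_apply, cramer_eq_adjugate_mulVec]
      rfl
  simp only [htrace, det_updateCol_eq_sum_perm, det_apply' (M _)]
  rw [sum_comm]
  refine HasDerivAt.fun_sum fun σ _ => ?_
  rw [← mul_sum]
  exact (HasDerivAt.fun_finsetProd fun i _ => h (σ i) i).const_mul _

theorem Polynomial.hasDerivAt_coeff_of_hasDerivAt_eval {p : 𝕜 → 𝕜[X]} {q : 𝕜[X]} {t₀ : 𝕜}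
    {N : ℕ} (hp : ∀ t, (p t).degree < N) (hq : q.degree < N)
    (h : ∀ s, HasDerivAt (fun t => (p t).eval s) (q.eval s) t₀) (m : ℕ) :
    HasDerivAt (fun t => (p t).coeff m) (q.coeff m) t₀ := by
  let v : Fin N → 𝕜 := fun i => Infinite.natEmbedding 𝕜 i
  have hv : Set.InjOn v (univ : Finset (Fin N)) :=
    fun a _ b _ hab => Fin.ext ((Infinite.natEmbedding 𝕜).injective hab)
  have hcoeff (f : 𝕜[X]) (hf : f.degree < N) :
      f.coeff m = ∑ i, f.eval (v i) * (Lagrange.basis univ v i).coeff m := by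
    conv_lhs => rw [Lagrange.eq_interpolate (f := f) hv (by simpa using hf)]
    simp [Lagrange.interpolate_apply]
  simp only [hcoeff _ (hp _), hcoeff q hq]
  exact HasDerivAt.fun_sum fun i _ => (h (v i)).mul_const _

end Calculus

section NewtonTransformation

variable {n : ℕ} {A : Matrix (Fin n) (Fin n) ℝ}

theorem coeff_charpoly_eq_sigmaM (hA : A.IsHermitian) {k : ℕ} (hk : k ≤ n) :
    A.charpoly.coeff (n - k) = (-1) ^ k * sigmaM n k A := by
  have hroots : A.charpoly = ((univ.val.map hA.eigenvalues).map fun x => X - C x).prod := by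
    rw [hA.charpoly_eq, Multiset.map_map]
    rfl
  rw [hroots, Multiset.prod_X_sub_C_coeff _ (by simp), Multiset.card_map, card_val, card_univ,
    Fintype.card_fin, Nat.sub_sub_self hk, esymm_map_val, sigmaM, dif_pos hA]
  rfl

theorem sigmaM_zero (hA : A.IsHermitian) : sigmaM n 0 A = 1 := by
  simp [sigmaM, dif_pos hA, esymmVec]

theorem newtonT_zero (hA : A.IsHermitian) : newtonT n 0 A = 1 := by
  simp [newtonT, sigmaM_zero hA]

theorem newtonT_succ (A : Matrix (Fin n) (Fin n) ℝ) (q : ℕ) :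
    newtonT n (q + 1) A = sigmaM n (q + 1) A • 1 - A * newtonT n q A := by
  rw [newtonT, sum_range_succ', newtonT, mul_sum, sub_eq_add_neg, add_comm, ← sum_neg_distrib]
  congr 1
  · simp
  · refine sum_congr rfl fun j _ => ?_
    rw [mul_smul_comm, ← pow_succ', ← neg_smul, Nat.add_sub_add_right, pow_succ]
    congr 1
    ring

theorem newtonT_self (hA : A.IsHermitian) : newtonT n n A = 0 := by
  have hterm (j : ℕ) (hj : j ∈ range (n + 1)) :
      ((-1 : ℝ) ^ j * sigmaM n (n - j) A) • A ^ j = (-1 : ℝ) ^ n • A.charpoly.coeff j • A ^ j := by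
    obtain ⟨d, rfl⟩ := Nat.exists_eq_add_of_le (Nat.lt_succ_iff.mp (mem_range.mp hj))
    have hc := coeff_charpoly_eq_sigmaM hA (Nat.le_add_left d j)
    rw [Nat.add_sub_cancel] at hc
    rw [Nat.add_sub_cancel_left, hc, smul_smul, ← mul_assoc, ← pow_add, add_assoc, pow_add,
      ← two_mul, pow_mul]
    norm_num
  rw [newtonT, sum_congr rfl hterm, ← smul_sum, ← aeval_eq_sum_range' (by simp),
    aeval_self_charpoly, smul_zero]

theorem smul_one_sub_mul_sum_newtonT (hA : A.IsHermitian) (s : ℝ) (m : ℕ) :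
    (s • 1 - A) * ∑ j ∈ range m, s ^ (m - 1 - j) • ((-1 : ℝ) ^ j • newtonT n j A)
      = (∑ j ∈ range (m + 1), s ^ (m - j) • ((-1) ^ j * sigmaM n j A)) • 1
        - (-1 : ℝ) ^ m • newtonT n m A := by
  induction m with
  | zero => simp [newtonT_zero hA, sigmaM_zero hA]
  | succ m ih =>
    have hAT : A * newtonT n m A = sigmaM n (m + 1) A • 1 - newtonT n (m + 1) A := by
      rw [newtonT_succ]
      abel
    rw [sum_range_succ_pow_smul, Nat.add_sub_cancel, sum_range_succ_pow_smul, mul_add,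
      mul_smul_comm, ih, mul_smul_comm, sub_mul, smul_mul, one_mul, hAT]
    module

theorem det_smul_one_sub_eq_sum_sigmaM (hA : A.IsHermitian) (s : ℝ) :
    (s • 1 - A).det = ∑ j ∈ range (n + 1), s ^ (n - j) • ((-1) ^ j * sigmaM n j A) := by
  rw [← eval_charpoly_eq_det_smul_one_sub, eval_eq_sum_range' (n := n + 1) (by simp),
    ← sum_range_reflect]
  refine sum_congr rfl fun j hj => ?_
  rw [Nat.add_sub_cancel, coeff_charpoly_eq_sigmaM hA (Nat.lt_succ_iff.mp (mem_range.mp hj)),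
    smul_eq_mul, mul_comm]

theorem adjugate_smul_one_sub (hA : A.IsHermitian) (s : ℝ) :
    (s • 1 - A).adjugate = ∑ j ∈ range n, s ^ (n - 1 - j) • ((-1 : ℝ) ^ j • newtonT n j A) := by
  have hmul (s : ℝ) : (s • 1 - A) * ∑ j ∈ range n, s ^ (n - 1 - j) • ((-1 : ℝ) ^ j • newtonT n j A)
      = (s • 1 - A).det • 1 := by
    rw [smul_one_sub_mul_sum_newtonT hA, newtonT_self hA, smul_zero, sub_zero,
      det_smul_one_sub_eq_sum_sigmaM hA]
  have hdense : Dense {s : ℝ | (s • 1 - A).det ≠ 0} := by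
    simp_rw [← eval_charpoly_eq_det_smul_one_sub]
    exact (finite_setOfPred_isRoot (charpoly_monic A).ne_zero).countable.dense_compl ℝ
  have hadj : Continuous fun s : ℝ => (s • 1 - A).adjugate :=
    (continuous_id.smul continuous_const |>.sub continuous_const).matrix_adjugate
  have hsum : Continuous fun s : ℝ =>
      ∑ j ∈ range n, s ^ (n - 1 - j) • ((-1 : ℝ) ^ j • newtonT n j A) := by
    fun_prop
  refine congrFun (hadj.ext_on hdense hsum fun s hs => ?_) s
  have hunit : IsUnit (s • 1 - A) := (isUnit_iff_isUnit_det _).mpr (isUnit_iff_ne_zero.mpr hs)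
  exact hunit.mul_left_cancel (by rw [mul_adjugate, hmul])

end NewtonTransformation

noncomputable def newtonTracePoly (n : ℕ) (A B : Matrix (Fin n) (Fin n) ℝ) : ℝ[X] :=
  ∑ j ∈ range n, C ((-1) ^ j * (newtonT n j A * B).trace) * X ^ (n - 1 - j)

section NewtonTracePoly

variable {n : ℕ} {A : Matrix (Fin n) (Fin n) ℝ} (B : Matrix (Fin n) (Fin n) ℝ)

theorem eval_newtonTracePoly (hA : A.IsHermitian) (s : ℝ) :
    (newtonTracePoly n A B).eval s = ((s • 1 - A).adjugate * B).trace := by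
  simp only [newtonTracePoly, eval_finsetSum, eval_mul, eval_C, eval_pow, eval_X,
    adjugate_smul_one_sub hA, sum_mul, trace_sum, smul_mul, trace_smul, smul_eq_mul]
  exact sum_congr rfl fun j _ => by ring

theorem degree_newtonTracePoly_lt : (newtonTracePoly n A B).degree < n := by
  refine mem_degreeLT.mp (Submodule.sum_mem _ fun j hj => mem_degreeLT.mpr ?_)
  have := mem_range.mp hj
  exact (degree_C_mul_X_pow_le _ _).trans_lt (by exact_mod_cast (by omega : n - 1 - j < n))

theorem coeff_newtonTracePoly {k : ℕ} (hk1 : 1 ≤ k) (hkn : k ≤ n) :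
    (newtonTracePoly n A B).coeff (n - k) = (-1) ^ (k - 1) * (newtonT n (k - 1) A * B).trace := by
  simp only [newtonTracePoly, finsetSum_coeff, coeff_C_mul_X_pow]
  rw [sum_eq_single (k - 1) (fun j hj hjk => if_neg ?_) (fun h => (h (mem_range.mpr ?_)).elim),
    if_pos (by omega)]
  · have := mem_range.mp hj
    omega
  · omega

end NewtonTracePoly

theorem hasDerivAt_eval_charpoly {n : ℕ} {A : ℝ → Matrix (Fin n) (Fin n) ℝ}
    {B : Matrix (Fin n) (Fin n) ℝ} {t₀ : ℝ} (hA : (A t₀).IsHermitian)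
    (hder : ∀ i j, HasDerivAt (fun t => A t i j) (B i j) t₀) (s : ℝ) :
    HasDerivAt (fun t => (A t).charpoly.eval s) (-(newtonTracePoly n (A t₀) B).eval s) t₀ := by
  simp only [eval_charpoly_eq_det_smul_one_sub, eval_newtonTracePoly B hA, ← trace_neg,
    ← Matrix.mul_neg]
  exact hasDerivAt_det fun i j => (hder i j).const_sub _

/-- Differentiating `σ_k` along a path of symmetric matrices: if `A(t)` has entrywise
derivative `B` at `t₀`, then `d/dt σ_k(A(t)) = T_{k-1}(A(t₀))^i_j · B^j_i = tr(T_{k-1}(A(t₀)) B)`. -/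
theorem sigma_hasDerivAt (n k : ℕ) (hk1 : 1 ≤ k) (hkn : k ≤ n)
    (A : ℝ → Matrix (Fin n) (Fin n) ℝ) (B : Matrix (Fin n) (Fin n) ℝ) (t₀ : ℝ)
    (hsymm : ∀ t, (A t).IsHermitian)
    (hder : ∀ i j, HasDerivAt (fun t => A t i j) (B i j) t₀) :
    HasDerivAt (fun t => sigmaM n k (A t)) ((newtonT n (k - 1) (A t₀) * B).trace) t₀ := by
  have hσ (t : ℝ) : sigmaM n k (A t) = (-1) ^ k * (A t).charpoly.coeff (n - k) := by
    rw [coeff_charpoly_eq_sigmaM (hsymm t) hkn, ← mul_assoc, ← pow_add, Even.neg_one_pow ⟨k, rfl⟩,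
      one_mul]
  have hcoeff := hasDerivAt_coeff_of_hasDerivAt_eval (N := n + 1) (p := fun t => (A t).charpoly)
    (fun t => by rw [charpoly_degree_eq_dim, Fintype.card_fin]; exact_mod_cast n.lt_succ_self)
    ((degree_neg _).trans_lt
      ((degree_newtonTracePoly_lt B).trans (by exact_mod_cast n.lt_succ_self)))
    (fun s => by simpa using hasDerivAt_eval_charpoly (hsymm t₀) hder s) (n - k)
  simp only [hσ, coeff_neg, coeff_newtonTracePoly B hk1 hkn] at hcoeff ⊢
  obtain ⟨k, rfl⟩ := Nat.exists_eq_add_of_le' hk1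
  refine (hcoeff.const_mul _).congr_deriv ?_
  rw [Nat.add_sub_cancel, pow_succ, mul_neg_one, neg_mul_neg, ← mul_assoc, ← pow_add,
    Even.neg_one_pow ⟨k, rfl⟩, one_mul]
end

section
/- If a symmetric matrix A has eigenvalues in the cone Γ_k^+, then its (k−1)-th Newton transformation T_{k-1}(A) is positive definite. -/
open Finset Matrix

/-- The Gårding cone `Γ_k^+`: the connected component of `{σ_k > 0}` in `ℝⁿ`
containing the positive cone (represented by the point `(1,…,1)`). -/
noncomputable def GammaPlus (n k : ℕ) : Set (Fin n → ℝ) :=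
  connectedComponentIn {x | 0 < esymmVec n k x} (fun _ => 1)

/-- A symmetric matrix lies in `Γ_k^+` if its eigenvalue vector does. -/
def InGammaPlus (n k : ℕ) (A : Matrix (Fin n) (Fin n) ℝ) : Prop :=
  ∃ h : A.IsHermitian, h.eigenvalues ∈ GammaPlus n k

/-!
Diagonalising `A = U diag(λ) Uᵀ` gives `T_{k-1}(A) = U diag(σ_{k-1}(λ | i)) Uᵀ`, where `σ_j(λ | i)`
is `σ_j` of `λ` with `λ_i` removed; this is the identity `∑ⱼ (-λ_i)^j σ_{q-j}(λ) = σ_q(λ | i)`,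
which follows from `σ_{j+1}(λ) = λ_i σ_j(λ | i) + σ_{j+1}(λ | i)`. So it suffices that
`σ_{k-1}(λ | i) > 0` on `Γ_k^+`.

The set where `σ_j(λ | i) > 0` for all `i` and all `j ≤ k - 1` is open, contains `(1, …, 1)`, and
is closed in `{σ_k > 0}`, hence contains the connected component `Γ_k^+`. For closedness: at a limit
point all `σ_j(λ | i)` are `≥ 0`, and `σ_k(λ) > 0` forces `σ_{k-1}(λ | i) > 0` or
`σ_k(λ | i) > 0`. Since `∏ₗ (X + λ_l)` is real-rooted, a run of nonnegative elementary symmetric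
functions `σ_0, …, σ_m` ending in a positive one is positive throughout.
-/

open Polynomial

namespace Multiset

variable {R : Type*}

theorem esymm_zero [CommSemiring R] (s : Multiset R) : s.esymm 0 = 1 := by
  simp [esymm, powersetCard_zero_left]

theorem esymm_cons_succ [CommSemiring R] (a : R) (s : Multiset R) (j : ℕ) :
    (a ::ₘ s).esymm (j + 1) = a * s.esymm j + s.esymm (j + 1) := by
  simp [esymm, powersetCard_cons, map_map, sum_map_mul_left, add_comm]

theorem sum_range_neg_pow_mul_esymm_cons [CommRing R] (a : R) (s : Multiset R) (q : ℕ) :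
    ∑ j ∈ Finset.range (q + 1), (-a) ^ j * (a ::ₘ s).esymm (q - j) = s.esymm q := by
  induction q with
  | zero => simp [esymm_zero]
  | succ q ih =>
    simp_rw [Finset.sum_range_succ' _ (q + 1), Nat.add_sub_add_right, pow_succ, mul_comm _ (-a),
      mul_assoc, ← Finset.mul_sum, ih, pow_zero, one_mul, Nat.sub_zero, esymm_cons_succ]
    ring

theorem le_card_of_esymm_ne_zero [CommSemiring R] {s : Multiset R} {k : ℕ}
    (h : s.esymm k ≠ 0) : k ≤ card s :=
  not_lt.1 fun hlt => h (by simp [esymm, powersetCard_eq_empty _ hlt])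

theorem esymm_pos [CommSemiring R] [PartialOrder R] [IsStrictOrderedRing R] {s : Multiset R}
    (hs : ∀ a ∈ s, 0 < a) {k : ℕ} (hk : k ≤ card s) : 0 < s.esymm k := by
  have hne : powersetCard k s ≠ ∅ := by
    rw [Ne, empty_eq_zero, ← card_eq_zero, card_powersetCard]
    exact (Nat.choose_pos hk).ne'
  simpa [esymm] using sum_lt_sum_of_nonempty hne (f := fun _ => 0) (g := prod) fun t ht =>
    prod_pos fun a ha => hs a (mem_of_le (mem_powersetCard.1 ht).1 ha)

end Multiset

namespace Polynomial

theorem Splits.derivative {p : ℝ[X]} (hp : p.Splits) : p.derivative.Splits := by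
  by_cases hd : p.derivative = 0
  · rw [hd]; exact Splits.zero
  rw [splits_iff_card_roots] at hp ⊢
  have := p.card_roots_le_derivative
  have := p.derivative.card_roots'
  have := p.natDegree_derivative_le
  omega

theorem Splits.iterate_derivative {p : ℝ[X]} (hp : p.Splits) (d : ℕ) :
    (Polynomial.derivative^[d] p).Splits := by
  induction d with
  | zero => exact hp
  | succ d ih => rw [Function.iterate_succ_apply']; exact ih.derivative

theorem coeff_pos_of_splits_of_coeff_nonneg {K : Type*} [Field K] [LinearOrder K]
    [IsStrictOrderedRing K] {p : K[X]} (hp : p.Splits)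
    (hnn : ∀ j, 0 ≤ p.coeff j) (h0 : 0 < p.coeff 0) {j : ℕ} (hj : j ≤ p.natDegree) :
    0 < p.coeff j := by
  have hroots : ∀ ρ ∈ p.roots, 0 < -ρ := by
    intro ρ hρ
    by_contra! hρ0
    have : 0 < p.eval ρ := by
      rw [eval_eq_sum_range]
      exact Finset.sum_pos' (fun i _ => mul_nonneg (hnn i) (pow_nonneg (by linarith) i))
        ⟨0, by simp, by simpa using h0⟩
    exact this.ne' (isRoot_of_mem_roots hρ)
  have hlc : 0 < p.leadingCoeff :=
    (hnn _).lt_of_ne' (leadingCoeff_ne_zero.2 (by rintro rfl; simp at h0))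
  rw [coeff_eq_esymm_roots_of_splits hp hj, mul_assoc, ← Multiset.esymm_neg]
  refine mul_pos hlc (Multiset.esymm_pos (fun a ha => ?_) (by
    rw [Multiset.card_map, splits_iff_card_roots.1 hp]; omega))
  obtain ⟨ρ, hρ, rfl⟩ := Multiset.mem_map.1 ha
  exact hroots ρ hρ

end Polynomial

namespace Multiset

/-- The `(card s - k)`-th derivative of `∏ (X + r)` is real-rooted, its coefficients are positive
multiples of `σ_k(s), …, σ_0(s)`, and its constant term is the one coming from `σ_k(s)`. -/
theorem esymm_pos_of_esymm_nonneg {s : Multiset ℝ} {k : ℕ} (hnn : ∀ j ≤ k, 0 ≤ s.esymm j)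
    (hk : 0 < s.esymm k) {j : ℕ} (hj : j ≤ k) : 0 < s.esymm j := by
  have hkN : k ≤ card s := le_card_of_esymm_ne_zero hk.ne'
  set p := (s.map fun r => X + C r).prod
  set d := card s - k
  set P := derivative^[d] p
  have hp_natDegree : p.natDegree = card s := by
    simp [p, natDegree_multiset_prod_of_monic, monic_X_add_C]
  have hP_coeff {m : ℕ} (hm : m ≤ k) :
      P.coeff m = (m + d).descFactorial d • s.esymm (k - m) := by
    rw [coeff_iterate_derivative, prod_X_add_C_coeff s (by omega)]
    congr 2
    omega
  have hdesc (m : ℕ) : 0 < (m + d).descFactorial d :=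
    Nat.descFactorial_pos.2 (by omega)
  have hP_nonneg (m : ℕ) : 0 ≤ P.coeff m := by
    rcases le_or_gt m k with hm | hm
    · rw [hP_coeff hm]
      exact nsmul_nonneg (hnn _ (by omega)) _
    · rw [coeff_iterate_derivative, coeff_eq_zero_of_natDegree_lt (by omega), smul_zero]
  have hP_natDegree : k ≤ P.natDegree := by
    refine le_natDegree_of_ne_zero ?_
    rw [hP_coeff le_rfl, Nat.sub_self, esymm_zero, nsmul_one]
    exact Nat.cast_ne_zero.2 (hdesc k).ne'
  have hp_splits : p.Splits := Splits.multisetProd (by simp [Splits.X_add_C])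
  have hP_pos := coeff_pos_of_splits_of_coeff_nonneg (Splits.iterate_derivative hp_splits d)
    hP_nonneg (by rw [hP_coeff k.zero_le, Nat.sub_zero]; exact nsmul_pos hk (hdesc 0).ne')
    ((k.sub_le j).trans hP_natDegree)
  rw [hP_coeff (by omega), Nat.sub_sub_self hj] at hP_pos
  exact (hnn j hj).lt_of_ne fun h => by simp [← h] at hP_pos

theorem esymm_pos_of_esymm_cons_pos {a : ℝ} {s : Multiset ℝ} {k : ℕ}
    (hnn : ∀ j ≤ k, 0 ≤ s.esymm j) (hpos : 0 < (a ::ₘ s).esymm (k + 1)) {j : ℕ} (hj : j ≤ k) :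
    0 < s.esymm j := by
  rcases (hnn k le_rfl).lt_or_eq with hk | hk
  · exact esymm_pos_of_esymm_nonneg hnn hk hj
  · have hk' : 0 < s.esymm (k + 1) := by
      rwa [esymm_cons_succ, ← hk, mul_zero, zero_add] at hpos
    refine esymm_pos_of_esymm_nonneg (fun i hi => ?_) hk' (by omega)
    rcases hi.lt_or_eq with hi | rfl
    exacts [hnn i (by omega), hk'.le]

end Multiset

noncomputable def esymmErase (n j : ℕ) (i : Fin n) (x : Fin n → ℝ) : ℝ :=
  ((univ.erase i).val.map x).esymm j

theorem esymmVec_eq_esymm_cons {n : ℕ} (j : ℕ) (i : Fin n) (x : Fin n → ℝ) :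
    esymmVec n j x = (x i ::ₘ (univ.erase i).val.map x).esymm j := by
  rw [esymmVec, ← Finset.esymm_map_val, ← Multiset.map_cons, Finset.erase_val,
    Multiset.cons_erase (mem_univ i)]

theorem continuous_esymmErase (n j : ℕ) (i : Fin n) : Continuous (esymmErase n j i) := by
  unfold esymmErase
  simp_rw [Finset.esymm_map_val]
  fun_prop

def esymmErasePosSet (n k : ℕ) : Set (Fin n → ℝ) :=
  {x | ∀ i, ∀ j ≤ k, 0 < esymmErase n j i x}

theorem isOpen_esymmErasePosSet (n k : ℕ) : IsOpen (esymmErasePosSet n k) := by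
  simp only [esymmErasePosSet, Set.ofPred_forall]
  exact isOpen_iInter_of_finite fun i => (Set.finite_Iic k).isOpen_biInter fun j _ =>
    isOpen_lt continuous_const (continuous_esymmErase n j i)

theorem one_mem_esymmErasePosSet {n k : ℕ} (hk : k < n) :
    (1 : Fin n → ℝ) ∈ esymmErasePosSet n k :=
  fun i j hj => Multiset.esymm_pos (by simp +contextual [Multiset.mem_replicate]) (by simp; omega)

theorem closure_esymmErasePosSet_inter_subset (n k : ℕ) :
    closure (esymmErasePosSet n k) ∩ {x | 0 < esymmVec n (k + 1) x} ⊆ esymmErasePosSet n k := by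
  rintro x ⟨hcl, hσ⟩ i j hj
  have hnn : ∀ j ≤ k, 0 ≤ esymmErase n j i x := fun j hj =>
    closure_minimal (fun y hy => (hy i j hj).le)
      (isClosed_le continuous_const (continuous_esymmErase n j i)) hcl
  rw [Set.mem_ofPred_eq, esymmVec_eq_esymm_cons _ i] at hσ
  exact Multiset.esymm_pos_of_esymm_cons_pos hnn hσ hj

theorem gammaPlus_succ_subset_esymmErasePosSet (n k : ℕ) : GammaPlus n (k + 1) ⊆ esymmErasePosSet n k := by
  intro x hx
  have h1 : (fun _ => 1 : Fin n → ℝ) ∈ {x | 0 < esymmVec n (k + 1) x} := by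
    by_contra h
    rwa [GammaPlus, connectedComponentIn_eq_empty h] at hx
  have hkn : k < n := by
    have hσ1 : 0 < esymmVec n (k + 1) fun _ => 1 := h1
    rw [esymmVec, ← Finset.esymm_map_val] at hσ1
    simpa using Multiset.le_card_of_esymm_ne_zero hσ1.ne'
  refine isPreconnected_connectedComponentIn.subset_of_closure_inter_subset
    (isOpen_esymmErasePosSet n k) ⟨1, mem_connectedComponentIn h1, one_mem_esymmErasePosSet hkn⟩
    ?_ hx
  exact (Set.inter_subset_inter_right _ (connectedComponentIn_subset _ _)).trans
    (closure_esymmErasePosSet_inter_subset n k)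

theorem newtonT_eq_conjStarAlgAut {n : ℕ} {A : Matrix (Fin n) (Fin n) ℝ} (hA : A.IsHermitian)
    (q : ℕ) : newtonT n q A = Unitary.conjStarAlgAut ℝ _ hA.eigenvectorUnitary
      (diagonal fun i => esymmErase n q i hA.eigenvalues) := by
  have hσ (j : ℕ) : sigmaM n j A = esymmVec n j hA.eigenvalues := dif_pos hA
  have hpow (j : ℕ) : A ^ j = Unitary.conjStarAlgAut ℝ _ hA.eigenvectorUnitary
      (diagonal hA.eigenvalues ^ j) := by
    have hspec := hA.spectral_theorem
    simp only [RCLike.ofReal_real_eq_id, Function.id_comp] at hspec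
    rw [map_pow, ← hspec]
  simp_rw [newtonT, hσ, hpow, ← map_smul, ← map_sum]
  congr 1
  have hdiag (i : Fin n) : esymmErase n q i hA.eigenvalues = ∑ j ∈ range (q + 1),
      (-1) ^ j * esymmVec n (q - j) hA.eigenvalues * hA.eigenvalues i ^ j := by
    rw [esymmErase, ← Multiset.sum_range_neg_pow_mul_esymm_cons (hA.eigenvalues i)]
    refine sum_congr rfl fun j _ => ?_
    rw [esymmVec_eq_esymm_cons _ i, neg_pow]
    ring
  ext a b
  simp [hdiag, diagonal_pow, Matrix.sum_apply, diagonal_apply]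

theorem newton_posDef_general (n k : ℕ)
    (A : Matrix (Fin n) (Fin n) ℝ) (hA : InGammaPlus n k A) :
    (newtonT n (k - 1) A).PosDef := by
  obtain ⟨hH, hx⟩ := hA
  rw [newtonT_eq_conjStarAlgAut hH, Unitary.conjStarAlgAut_apply,
    Unitary.isUnit_coe.posDef_star_right_conjugate_iff, posDef_diagonal_iff]
  intro i
  cases k with
  | zero => simp [esymmErase, Multiset.esymm_zero]
  | succ k => exact gammaPlus_succ_subset_esymmErasePosSet n k hx i k le_rfl

/-- If a symmetric matrix `A` has eigenvalues in `Γ_k^+`, then the Newton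
transformation `T_{k-1}(A)` is positive definite. -/
theorem newton_posDef (n k : ℕ) (hk1 : 1 ≤ k) (hkn : k ≤ n)
    (A : Matrix (Fin n) (Fin n) ℝ) (hA : InGammaPlus n k A) :
    (newtonT n (k - 1) A).PosDef :=
  newton_posDef_general n k A hA
end

section
/- In normal coordinates centered at a point p of a Riemannian manifold, for any tangent vector with components u_l one has Σ_{l,m} (∂_i ∂_j g^{lm} + 2 ∂_l Γ^m_{ij}) u_l u_m = 2 Σ_{l,m} R_{iljm} u_l u_m at p, where R_{iljm} are the components of the Riemann curvature tensor. -/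
open Finset Matrix

/-- Partial derivative in the `i`-th coordinate direction of a function on `ℝⁿ`. -/
noncomputable def pd (n : ℕ) (i : Fin n) (f : (Fin n → ℝ) → ℝ) (x : Fin n → ℝ) : ℝ :=
  fderiv ℝ f x (Pi.single i 1)

/-- The Christoffel symbols `Γ^l_{ij}` of a Riemannian metric `g` given in
coordinates as a matrix-valued function on `ℝⁿ`. -/
noncomputable def christoffel (n : ℕ) (g : (Fin n → ℝ) → Matrix (Fin n) (Fin n) ℝ)
    (l i j : Fin n) (x : Fin n → ℝ) : ℝ :=
  (1 / 2) * ∑ r, (g x)⁻¹ l r *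
    (pd n i (fun y => g y r j) x + pd n j (fun y => g y r i) x - pd n r (fun y => g y i j) x)

/-- The Hessian `(∇²_g f)_{ij} = ∂_i ∂_j f − Γ^l_{ij} ∂_l f` of a function with
respect to the metric `g`, in coordinates. -/
noncomputable def hessM (n : ℕ) (g : (Fin n → ℝ) → Matrix (Fin n) (Fin n) ℝ)
    (f : (Fin n → ℝ) → ℝ) (x : Fin n → ℝ) : Matrix (Fin n) (Fin n) ℝ :=
  Matrix.of fun i j =>
    pd n i (fun y => pd n j f y) x - ∑ l, christoffel n g l i j x * pd n l f x

/-- The squared gradient `|∇f|_g² = g^{lr} ∂_l f ∂_r f`. -/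
noncomputable def gradSq (n : ℕ) (g : (Fin n → ℝ) → Matrix (Fin n) (Fin n) ℝ)
    (f : (Fin n → ℝ) → ℝ) (x : Fin n → ℝ) : ℝ :=
  ∑ l, ∑ r, (g x)⁻¹ l r * pd n l f x * pd n r f x

/-- The components `R_{iljm}` of the Riemann curvature tensor in coordinates. -/
noncomputable def riem (n : ℕ) (g : (Fin n → ℝ) → Matrix (Fin n) (Fin n) ℝ)
    (x : Fin n → ℝ) (i l j m : Fin n) : ℝ :=
  ∑ s, g x m s *
    (pd n l (fun y => christoffel n g s i j y) x - pd n i (fun y => christoffel n g s l j y) x +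
      ∑ r, (christoffel n g s l r x * christoffel n g r i j x -
            christoffel n g s i r x * christoffel n g r l j x))

section helpers
variable {n : ℕ}

lemma pd_congr (i : Fin n) {f g : (Fin n → ℝ) → ℝ} (h : ∀ y, f y = g y) (x : Fin n → ℝ) :
    pd n i f x = pd n i g x := by
  have hfg : f = g := funext h
  rw [hfg]

lemma pd_const (i : Fin n) (c : ℝ) (x : Fin n → ℝ) : pd n i (fun _ => c) x = 0 := by
  simp [pd]

lemma pd_contDiff {f : (Fin n → ℝ) → ℝ} (i : Fin n) (hf : ContDiff ℝ (⊤ : ℕ∞) f) :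
    ContDiff ℝ (⊤ : ℕ∞) (pd n i f) :=
  (hf.fderiv_right (by simp)).clm_apply contDiff_const

lemma pd_mul {f g : (Fin n → ℝ) → ℝ} {x : Fin n → ℝ} (i : Fin n)
    (hf : DifferentiableAt ℝ f x) (hg : DifferentiableAt ℝ g x) :
    pd n i (fun y => f y * g y) x = pd n i f x * g x + f x * pd n i g x := by
  simp only [pd, fderiv_fun_mul hf hg]
  simp only [ContinuousLinearMap.add_apply, ContinuousLinearMap.smul_apply, smul_eq_mul]
  ring

lemma pd_add {f g : (Fin n → ℝ) → ℝ} {x : Fin n → ℝ} (i : Fin n)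
    (hf : DifferentiableAt ℝ f x) (hg : DifferentiableAt ℝ g x) :
    pd n i (fun y => f y + g y) x = pd n i f x + pd n i g x := by
  simp [pd, fderiv_fun_add hf hg]

lemma pd_sub {f g : (Fin n → ℝ) → ℝ} {x : Fin n → ℝ} (i : Fin n)
    (hf : DifferentiableAt ℝ f x) (hg : DifferentiableAt ℝ g x) :
    pd n i (fun y => f y - g y) x = pd n i f x - pd n i g x := by
  simp [pd, fderiv_fun_sub hf hg]

lemma pd_sum {ι : Type*} (s : Finset ι) {f : ι → (Fin n → ℝ) → ℝ} {x : Fin n → ℝ} (i : Fin n)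
    (hf : ∀ k ∈ s, DifferentiableAt ℝ (f k) x) :
    pd n i (fun y => ∑ k ∈ s, f k y) x = ∑ k ∈ s, pd n i (f k) x := by
  simp [pd, fderiv_fun_sum hf]

lemma pd_const_mul {f : (Fin n → ℝ) → ℝ} {x : Fin n → ℝ} (i : Fin n) (c : ℝ)
    (hf : DifferentiableAt ℝ f x) :
    pd n i (fun y => c * f y) x = c * pd n i f x := by
  simp [pd, fderiv_const_mul hf c]

lemma contDiff_matrix_det {M : (Fin n → ℝ) → Matrix (Fin n) (Fin n) ℝ}
    (h : ∀ i j, ContDiff ℝ (⊤ : ℕ∞) fun x => M x i j) : ContDiff ℝ (⊤ : ℕ∞) fun x => (M x).det := by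
  simp only [Matrix.det_apply]
  refine ContDiff.sum fun σ _ => ?_
  simp only [Units.smul_def, zsmul_eq_mul]
  refine contDiff_const.mul ?_
  have key : ∀ s : Finset (Fin n), ContDiff ℝ (⊤ : ℕ∞) fun x => ∏ k ∈ s, M x (σ k) k := by
    intro s
    induction s using Finset.induction with
    | empty => simpa using contDiff_const
    | insert _ _ hk ih =>
      simp only [Finset.prod_insert hk]
      exact (h _ _).mul ih
  exact key _

lemma contDiff_matrix_adjugate {M : (Fin n → ℝ) → Matrix (Fin n) (Fin n) ℝ}
    (h : ∀ i j, ContDiff ℝ (⊤ : ℕ∞) fun x => M x i j) (i j : Fin n) :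
    ContDiff ℝ (⊤ : ℕ∞) fun x => (M x).adjugate i j := by
  simp only [Matrix.adjugate_apply]
  apply contDiff_matrix_det
  intro a b
  rcases eq_or_ne a j with rfl | hne
  · simpa [Matrix.updateRow_self] using
      (contDiff_const : ContDiff ℝ (⊤ : ℕ∞) fun _ : Fin n → ℝ => (Pi.single i 1 : Fin n → ℝ) b)
  · simpa [Matrix.updateRow_ne hne] using h a b

lemma contDiff_matrix_inv {M : (Fin n → ℝ) → Matrix (Fin n) (Fin n) ℝ}
    (h : ∀ i j, ContDiff ℝ (⊤ : ℕ∞) fun x => M x i j) (hdet : ∀ x, (M x).det ≠ 0) (l m : Fin n) :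
    ContDiff ℝ (⊤ : ℕ∞) fun x => (M x)⁻¹ l m := by
  have heq : (fun x => (M x)⁻¹ l m) = fun x => ((M x).det)⁻¹ * (M x).adjugate l m := by
    funext x
    rw [Matrix.inv_def]
    simp [Ring.inverse_eq_inv, Matrix.smul_apply, smul_eq_mul]
  rw [heq]
  exact ((contDiff_matrix_det h).inv hdet).mul (contDiff_matrix_adjugate h l m)

end helpers

/-- In normal coordinates at `p` (so `g(p) = I` and `Γ(p) = 0`), for any vector `u`:
`Σ_{l,m} (∂_i ∂_j g^{lm} + 2 ∂_l Γ^m_{ij}) u_l u_m = 2 Σ_{l,m} R_{iljm} u_l u_m` at `p`. -/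
theorem normal_coordinates_curvature (n : ℕ) (hn : 1 ≤ n)
    (g : (Fin n → ℝ) → Matrix (Fin n) (Fin n) ℝ)
    (hgpd : ∀ x, (g x).PosDef) (hgsymm : ∀ x, (g x).IsSymm)
    (hgsm : ∀ i j, ContDiff ℝ (⊤ : ℕ∞) fun x => g x i j)
    (p : Fin n → ℝ) (hgp : g p = 1)
    (hΓp : ∀ l i j, christoffel n g l i j p = 0)
    (i j : Fin n) (u : Fin n → ℝ) :
    ∑ l, ∑ m, (pd n i (fun x => pd n j (fun y => (g y)⁻¹ l m) x) p +
        2 * pd n l (fun x => christoffel n g m i j x) p) * u l * u m =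
      2 * ∑ l, ∑ m, riem n g p i l j m * u l * u m := by

  classical
  have hdet : ∀ x, (g x).det ≠ 0 := fun x => (hgpd x).det_pos.ne'
  have cdinv : ∀ a b, ContDiff ℝ (⊤ : ℕ∞) fun y => (g y)⁻¹ a b :=
    fun a b => contDiff_matrix_inv hgsm hdet a b
  have dgx : ∀ (a b : Fin n) (x : Fin n → ℝ), DifferentiableAt ℝ (fun y => g y a b) x :=
    fun a b x => ((hgsm a b).differentiable (by simp)).differentiableAt
  have dinvx : ∀ (a b : Fin n) (x : Fin n → ℝ), DifferentiableAt ℝ (fun y => (g y)⁻¹ a b) x :=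
    fun a b x => ((cdinv a b).differentiable (by simp)).differentiableAt
  have dpdg : ∀ (k a b : Fin n) (x : Fin n → ℝ),
      DifferentiableAt ℝ (fun x' => pd n k (fun y => g y a b) x') x :=
    fun k a b x => ((pd_contDiff k (hgsm a b)).differentiable (by simp)).differentiableAt
  have dpdinv : ∀ (k a b : Fin n) (x : Fin n → ℝ),
      DifferentiableAt ℝ (fun x' => pd n k (fun y => (g y)⁻¹ a b) x') x :=
    fun k a b x => ((pd_contDiff k (cdinv a b)).differentiable (by simp)).differentiableAt
  -- first derivatives of the metric vanish at p
  have hC : ∀ l a b : Fin n, pd n a (fun y => g y l b) p + pd n b (fun y => g y l a) p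
      - pd n l (fun y => g y a b) p = 0 := by
    intro l a b
    have h0 := hΓp l a b
    simp only [christoffel, hgp, inv_one, Matrix.one_apply, ite_mul, one_mul, zero_mul,
      Finset.sum_ite_eq, Finset.mem_univ, if_true] at h0
    linarith
  have dg : ∀ k a b : Fin n, pd n k (fun y => g y a b) p = 0 := by
    intro k a b
    have h1 := hC a k b
    have h2 := hC b k a
    have e1 : pd n k (fun y => g y b a) p = pd n k (fun y => g y a b) p :=
      pd_congr k (fun y => (hgsymm y).apply a b) p
    have e2 : pd n a (fun y => g y b k) p = pd n a (fun y => g y k b) p :=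
      pd_congr a (fun y => (hgsymm y).apply k b) p
    have e3 : pd n b (fun y => g y a k) p = pd n b (fun y => g y k a) p :=
      pd_congr b (fun y => (hgsymm y).apply k a) p
    linarith
  -- the defining identity of the inverse metric
  have hInvId : ∀ (x : Fin n → ℝ) (l m : Fin n),
      ∑ r, (g x)⁻¹ l r * g x r m = (1 : Matrix (Fin n) (Fin n) ℝ) l m := by
    intro x l m
    rw [← Matrix.mul_apply, Matrix.nonsing_inv_mul _ (isUnit_iff_ne_zero.mpr (hdet x))]
  -- differentiated once (valid everywhere)
  have step1 : ∀ (x : Fin n → ℝ) (k l m : Fin n),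
      ∑ r, (pd n k (fun y => (g y)⁻¹ l r) x * g x r m
        + (g x)⁻¹ l r * pd n k (fun y => g y r m) x) = 0 := by
    intro x k l m
    have h0 : pd n k (fun y => ∑ r, (g y)⁻¹ l r * g y r m) x = 0 :=
      (pd_congr k (fun y => hInvId y l m) x).trans (pd_const k _ x)
    have h1 : pd n k (fun y => ∑ r, (g y)⁻¹ l r * g y r m) x
        = ∑ r, pd n k (fun y => (g y)⁻¹ l r * g y r m) x :=
      pd_sum Finset.univ k fun r _ => (dinvx l r x).mul (dgx r m x)
    have h2 : ∀ r : Fin n, pd n k (fun y => (g y)⁻¹ l r * g y r m) x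
        = pd n k (fun y => (g y)⁻¹ l r) x * g x r m + (g x)⁻¹ l r * pd n k (fun y => g y r m) x :=
      fun r => pd_mul k (dinvx l r x) (dgx r m x)
    calc ∑ r, (pd n k (fun y => (g y)⁻¹ l r) x * g x r m
          + (g x)⁻¹ l r * pd n k (fun y => g y r m) x)
        = ∑ r, pd n k (fun y => (g y)⁻¹ l r * g y r m) x :=
          Finset.sum_congr rfl fun r _ => (h2 r).symm
      _ = pd n k (fun y => ∑ r, (g y)⁻¹ l r * g y r m) x := h1.symm
      _ = 0 := h0
  -- first derivatives of the inverse metric vanish at p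
  have dinvp : ∀ k l m : Fin n, pd n k (fun y => (g y)⁻¹ l m) p = 0 := by
    intro k l m
    have h0 := step1 p k l m
    simp only [hgp, inv_one, Matrix.one_apply, dg, mul_zero, add_zero, mul_ite, mul_one,
      Finset.sum_ite_eq', Finset.mem_univ, if_true] at h0
    exact h0
  -- second derivative of the inverse metric at p
  have d2inv : ∀ l m : Fin n, pd n i (fun x => pd n j (fun y => (g y)⁻¹ l m) x) p
      = -(pd n i (fun x => pd n j (fun y => g y l m) x) p) := by
    intro l m
    have h0 : pd n i (fun x => ∑ r, (pd n j (fun y => (g y)⁻¹ l r) x * g x r m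
        + (g x)⁻¹ l r * pd n j (fun y => g y r m) x)) p = 0 :=
      (pd_congr i (fun x => step1 x j l m) p).trans (pd_const i 0 p)
    have h1 : pd n i (fun x => ∑ r, (pd n j (fun y => (g y)⁻¹ l r) x * g x r m
        + (g x)⁻¹ l r * pd n j (fun y => g y r m) x)) p
        = ∑ r, pd n i (fun x => pd n j (fun y => (g y)⁻¹ l r) x * g x r m
            + (g x)⁻¹ l r * pd n j (fun y => g y r m) x) p :=
      pd_sum Finset.univ i fun r _ =>
        ((dpdinv j l r p).mul (dgx r m p)).add ((dinvx l r p).mul (dpdg j r m p))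
    have h2 : ∀ r : Fin n, pd n i (fun x => pd n j (fun y => (g y)⁻¹ l r) x * g x r m
        + (g x)⁻¹ l r * pd n j (fun y => g y r m) x) p
        = (if r = m then (1:ℝ) else 0) * pd n i (fun x => pd n j (fun y => (g y)⁻¹ l r) x) p
          + (if l = r then (1:ℝ) else 0) * pd n i (fun x => pd n j (fun y => g y r m) x) p := by
      intro r
      have ha := pd_add i ((dpdinv j l r p).fun_mul (dgx r m p)) ((dinvx l r p).fun_mul (dpdg j r m p))
      have hb := pd_mul i (dpdinv j l r p) (dgx r m p)
      have hc := pd_mul i (dinvx l r p) (dpdg j r m p)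
      simp only [ha, hb, hc, dinvp, hgp, inv_one, Matrix.one_apply, zero_mul, mul_zero,
        add_zero, zero_add, mul_ite, ite_mul, mul_one, one_mul, mul_zero, zero_mul]
    have h3 : ∑ r, ((if r = m then (1:ℝ) else 0)
          * pd n i (fun x => pd n j (fun y => (g y)⁻¹ l r) x) p
        + (if l = r then (1:ℝ) else 0) * pd n i (fun x => pd n j (fun y => g y r m) x) p)
        = pd n i (fun x => pd n j (fun y => (g y)⁻¹ l m) x) p
          + pd n i (fun x => pd n j (fun y => g y l m) x) p := by
      rw [Finset.sum_add_distrib]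
      congr 1
      · simp
      · simp
    have h4 : pd n i (fun x => pd n j (fun y => (g y)⁻¹ l m) x) p
        + pd n i (fun x => pd n j (fun y => g y l m) x) p = 0 := by
      rw [← h3, ← Finset.sum_congr rfl fun r _ => h2 r, ← h1]
      exact h0
    linarith
  -- derivative of the Christoffel symbols at p
  have key2 : ∀ k m a b : Fin n, pd n k (fun x => christoffel n g m a b x) p
      = (1/2) * (pd n k (fun x => pd n a (fun y => g y m b) x) p
        + pd n k (fun x => pd n b (fun y => g y m a) x) p
        - pd n k (fun x => pd n m (fun y => g y a b) x) p) := by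
    intro k m a b
    have diffW : ∀ (r : Fin n) (x : Fin n → ℝ), DifferentiableAt ℝ
        (fun x' => pd n a (fun y => g y r b) x' + pd n b (fun y => g y r a) x'
          - pd n r (fun y => g y a b) x') x :=
      fun r x => ((dpdg a r b x).add (dpdg b r a x)).sub (dpdg r a b x)
    have e0 : pd n k (fun x => christoffel n g m a b x) p
        = pd n k (fun x => (1/2) * ∑ r, (g x)⁻¹ m r * (pd n a (fun y => g y r b) x
          + pd n b (fun y => g y r a) x - pd n r (fun y => g y a b) x)) p := rfl
    have e1 : pd n k (fun x => (1/2) * ∑ r, (g x)⁻¹ m r * (pd n a (fun y => g y r b) x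
          + pd n b (fun y => g y r a) x - pd n r (fun y => g y a b) x)) p
        = (1/2) * pd n k (fun x => ∑ r, (g x)⁻¹ m r * (pd n a (fun y => g y r b) x
          + pd n b (fun y => g y r a) x - pd n r (fun y => g y a b) x)) p :=
      pd_const_mul k (1/2) (DifferentiableAt.fun_sum fun r _ => (dinvx m r p).mul (diffW r p))
    have e2 : pd n k (fun x => ∑ r, (g x)⁻¹ m r * (pd n a (fun y => g y r b) x
          + pd n b (fun y => g y r a) x - pd n r (fun y => g y a b) x)) p
        = ∑ r, pd n k (fun x => (g x)⁻¹ m r * (pd n a (fun y => g y r b) x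
          + pd n b (fun y => g y r a) x - pd n r (fun y => g y a b) x)) p :=
      pd_sum Finset.univ k fun r _ => (dinvx m r p).mul (diffW r p)
    have e3 : ∀ r : Fin n, pd n k (fun x => (g x)⁻¹ m r * (pd n a (fun y => g y r b) x
          + pd n b (fun y => g y r a) x - pd n r (fun y => g y a b) x)) p
        = (if m = r then (1:ℝ) else 0) * (pd n k (fun x => pd n a (fun y => g y r b) x) p
          + pd n k (fun x => pd n b (fun y => g y r a) x) p
          - pd n k (fun x => pd n r (fun y => g y a b) x) p) := by
      intro r
      have hm := pd_mul k (dinvx m r p) (diffW r p)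
      have hW := pd_sub k ((dpdg a r b p).fun_add (dpdg b r a p)) (dpdg r a b p)
      have hW2 := pd_add k (dpdg a r b p) (dpdg b r a p)
      simp only [hm, hW, hW2, dinvp, hgp, inv_one, Matrix.one_apply, zero_mul, zero_add]
    have e4 : ∑ r, ((if m = r then (1:ℝ) else 0)
          * (pd n k (fun x => pd n a (fun y => g y r b) x) p
            + pd n k (fun x => pd n b (fun y => g y r a) x) p
            - pd n k (fun x => pd n r (fun y => g y a b) x) p))
        = pd n k (fun x => pd n a (fun y => g y m b) x) p
          + pd n k (fun x => pd n b (fun y => g y m a) x) p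
          - pd n k (fun x => pd n m (fun y => g y a b) x) p := by
      simp
    rw [e0, e1, e2, Finset.sum_congr rfl fun r _ => e3 r, e4]
  -- the curvature at p
  have key3 : ∀ l m : Fin n, riem n g p i l j m
      = pd n l (fun y => christoffel n g m i j y) p
        - pd n i (fun y => christoffel n g m l j y) p := by
    intro l m
    simp [riem, hΓp, hgp, Matrix.one_apply]
  -- symmetry of g under second derivatives
  have hsym : ∀ l m : Fin n, pd n i (fun x => pd n j (fun y => g y m l) x) p
      = pd n i (fun x => pd n j (fun y => g y l m) x) p := by
    intro l m
    exact pd_congr i (fun x => pd_congr j (fun y => (hgsymm y).apply l m) x) p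
  -- swap of summation indices
  have hswap : ∑ l, ∑ m, pd n i (fun x => pd n m (fun y => g y l j) x) p * u l * u m
      = ∑ l, ∑ m, pd n i (fun x => pd n l (fun y => g y m j) x) p * u l * u m := by
    rw [Finset.sum_comm]
    exact Finset.sum_congr rfl fun a _ => Finset.sum_congr rfl fun b _ => by ring
  -- rewrite the left-hand side
  have hterm1 : ∀ l m : Fin n,
      (pd n i (fun x => pd n j (fun y => (g y)⁻¹ l m) x) p +
        2 * pd n l (fun x => christoffel n g m i j x) p) * u l * u m
      = (-(pd n i (fun x => pd n j (fun y => g y l m) x) p)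
          + (pd n l (fun x => pd n i (fun y => g y m j) x) p
            + pd n l (fun x => pd n j (fun y => g y m i) x) p
            - pd n l (fun x => pd n m (fun y => g y i j) x) p)) * u l * u m := by
    intro l m
    rw [d2inv l m, key2 l m i j]
    ring
  have hterm2 : ∀ l m : Fin n, riem n g p i l j m * u l * u m
      = ((1/2) * (pd n l (fun x => pd n i (fun y => g y m j) x) p
            + pd n l (fun x => pd n j (fun y => g y m i) x) p
            - pd n l (fun x => pd n m (fun y => g y i j) x) p)
        - (1/2) * (pd n i (fun x => pd n l (fun y => g y m j) x) p
            + pd n i (fun x => pd n j (fun y => g y m l) x) p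
            - pd n i (fun x => pd n m (fun y => g y l j) x) p)) * u l * u m := by
    intro l m
    rw [key3 l m, key2 l m i j, key2 i m l j]
  have hL : ∑ l, ∑ m, (pd n i (fun x => pd n j (fun y => (g y)⁻¹ l m) x) p +
        2 * pd n l (fun x => christoffel n g m i j x) p) * u l * u m
      = ∑ l, ∑ m, (-(pd n i (fun x => pd n j (fun y => g y l m) x) p)
          + (pd n l (fun x => pd n i (fun y => g y m j) x) p
            + pd n l (fun x => pd n j (fun y => g y m i) x) p
            - pd n l (fun x => pd n m (fun y => g y i j) x) p)) * u l * u m :=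
    Finset.sum_congr rfl fun l _ => Finset.sum_congr rfl fun m _ => hterm1 l m
  have hR : ∑ l, ∑ m, riem n g p i l j m * u l * u m
      = ∑ l, ∑ m, ((1/2) * (pd n l (fun x => pd n i (fun y => g y m j) x) p
            + pd n l (fun x => pd n j (fun y => g y m i) x) p
            - pd n l (fun x => pd n m (fun y => g y i j) x) p)
        - (1/2) * (pd n i (fun x => pd n l (fun y => g y m j) x) p
            + pd n i (fun x => pd n j (fun y => g y m l) x) p
            - pd n i (fun x => pd n m (fun y => g y l j) x) p)) * u l * u m :=
    Finset.sum_congr rfl fun l _ => Finset.sum_congr rfl fun m _ => hterm2 l m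
  rw [hL, hR]
  have hQ : ∀ l m : Fin n,
      2 * (((1/2) * (pd n l (fun x => pd n i (fun y => g y m j) x) p
            + pd n l (fun x => pd n j (fun y => g y m i) x) p
            - pd n l (fun x => pd n m (fun y => g y i j) x) p)
        - (1/2) * (pd n i (fun x => pd n l (fun y => g y m j) x) p
            + pd n i (fun x => pd n j (fun y => g y m l) x) p
            - pd n i (fun x => pd n m (fun y => g y l j) x) p)) * u l * u m)
      = (-(pd n i (fun x => pd n j (fun y => g y l m) x) p)
          + (pd n l (fun x => pd n i (fun y => g y m j) x) p
            + pd n l (fun x => pd n j (fun y => g y m i) x) p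
            - pd n l (fun x => pd n m (fun y => g y i j) x) p)) * u l * u m
        + (pd n i (fun x => pd n m (fun y => g y l j) x) p * u l * u m
          - pd n i (fun x => pd n l (fun y => g y m j) x) p * u l * u m) := by
    intro l m
    rw [hsym l m]
    ring
  rw [Finset.mul_sum]
  simp only [Finset.mul_sum]
  rw [Finset.sum_congr rfl fun l (_ : l ∈ Finset.univ) =>
    Finset.sum_congr rfl fun m (_ : m ∈ Finset.univ) => hQ l m]
  simp only [Finset.sum_add_distrib, Finset.sum_sub_distrib]
  rw [hswap, sub_self, add_zero]
end

section
/- Let δ̲ < 0 < δ̄ be real constants. There exist constants c₁ > 0, c₂, and p > 0 such that φ(s) = c₁(c₂ − s)^p satisfies φ′(s) < 0 and φ″(s) − φ′(s)² + φ′(s) > 0 for all s with δ̲ < s < δ̄. -/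
lemma deriv_aux (a c₂ : ℝ) (n : ℕ) :
    deriv (fun t => a * (c₂ - t) ^ n) = fun s => (-(a * n)) * (c₂ - s) ^ (n - 1) := by
  funext s
  have h1 : HasDerivAt (fun t : ℝ => c₂ - t) (-1) s := by
    simpa using (hasDerivAt_id s).const_sub c₂
  have h : HasDerivAt (fun t => a * (c₂ - t) ^ n)
      (a * ((n : ℝ) * (c₂ - s) ^ (n - 1) * (-1))) s := (h1.pow n).const_mul a
  rw [h.deriv]; ring

/-- Choice of the auxiliary function `φ(s) = c₁(c₂ − s)^p` with `φ′ < 0` and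
`φ″ − φ′² + φ′ > 0` on `(δ̲, δ̄)`. -/
theorem choose_phi_neg (δ₁ δ₂ : ℝ) (hδ₁ : δ₁ < 0) (hδ₂ : 0 < δ₂) :
    ∃ (c₁ c₂ p : ℝ), 0 < c₁ ∧ 0 < p ∧
      ∀ s, δ₁ < s → s < δ₂ →
        deriv (fun t => c₁ * (c₂ - t) ^ p) s < 0 ∧
        0 < deriv (deriv (fun t => c₁ * (c₂ - t) ^ p)) s -
            (deriv (fun t => c₁ * (c₂ - t) ^ p) s) ^ 2 +
            deriv (fun t => c₁ * (c₂ - t) ^ p) s := by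
  set M : ℝ := δ₂ + 1 - δ₁ with hM
  have hM1 : 1 < M := by simp [hM]; linarith
  set n : ℕ := ⌈M⌉₊ + 2 with hn
  have hMn : M ≤ (n : ℝ) - 2 := by
    have := Nat.le_ceil M
    have : (⌈M⌉₊ : ℝ) ≤ (n : ℝ) - 2 := by simp [hn]
    linarith [Nat.le_ceil M]
  have hMpos : (0:ℝ) < M := by linarith
  have hnpos : (0:ℝ) < (n : ℝ) := by positivity
  set c₁ : ℝ := 1 / (2 * n * M ^ n) with hc₁
  have hc₁pos : 0 < c₁ := by positivity
  refine ⟨c₁, δ₂ + 1, (n : ℝ), hc₁pos, by positivity, ?_⟩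
  intro s hs1 hs2
  have hfun : (fun t => c₁ * (δ₂ + 1 - t) ^ (n : ℝ)) = fun t => c₁ * (δ₂ + 1 - t) ^ n := by
    funext t; rw [Real.rpow_natCast]
  set u : ℝ := δ₂ + 1 - s with hu
  have hu1 : 1 < u := by simp [hu]; linarith
  have huM : u ≤ M := by simp [hu, hM]; linarith
  have hupos : 0 < u := by linarith
  have hd1 : deriv (fun t => c₁ * (δ₂ + 1 - t) ^ (n : ℝ)) s
      = (-(c₁ * n)) * u ^ (n - 1) := by
    rw [hfun, deriv_aux]
  have hd2 : deriv (deriv (fun t => c₁ * (δ₂ + 1 - t) ^ (n : ℝ))) s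
      = (-((-(c₁ * n)) * ((n - 1 : ℕ) : ℝ))) * u ^ (n - 1 - 1) := by
    rw [hfun, deriv_aux, deriv_aux]
  rw [hd1, hd2]
  have hn2 : 2 ≤ n := by simp [hn]
  have hcast : ((n - 1 : ℕ) : ℝ) = (n : ℝ) - 1 := by
    have := Nat.cast_sub (le_trans (by norm_num) hn2) (R := ℝ) (m := 1) (n := n)
    simpa using this
  have e1 : u ^ (n - 1) = u ^ (n - 2) * u := by
    have h : n - 1 = (n - 2) + 1 := by omega
    rw [h, pow_succ]
  have e2 : (u ^ (n - 1)) ^ 2 = u ^ (n - 2) * u ^ n := by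
    have h : (n - 1) * 2 = (n - 2) + n := by omega
    rw [← pow_mul, h, pow_add]
  have e3 : n - 1 - 1 = n - 2 := by omega
  constructor
  · have : 0 < c₁ * n * u ^ (n - 1) := by positivity
    nlinarith [this]
  · have hun : u ^ n ≤ M ^ n := pow_le_pow_left₀ (le_of_lt hupos) huM n
    have hhalf : c₁ * n * M ^ n = 1 / 2 := by
      rw [hc₁]
      field_simp
    have hinner : 0 < ((n : ℝ) - 1) - u - c₁ * n * u ^ n := by
      have h1 : c₁ * n * u ^ n ≤ 1 / 2 := by
        calc c₁ * n * u ^ n ≤ c₁ * n * M ^ n := by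
              have : 0 < c₁ * n := by positivity
              nlinarith
          _ = 1 / 2 := hhalf
      linarith [hMn, huM]
    have key : 0 < c₁ * n * u ^ (n - 2) * (((n : ℝ) - 1) - u - c₁ * n * u ^ n) :=
      mul_pos (by positivity) hinner
    have expand : (-((-(c₁ * n)) * ((n - 1 : ℕ) : ℝ))) * u ^ (n - 1 - 1) -
        ((-(c₁ * n)) * u ^ (n - 1)) ^ 2 + (-(c₁ * n)) * u ^ (n - 1)
        = c₁ * n * u ^ (n - 2) * (((n : ℝ) - 1) - u - c₁ * n * u ^ n) := by
      rw [hcast, e3, mul_pow, e2, e1]; ring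
    linarith [key, expand.ge, expand.le]
end

section
/- Let M > 0, α > 0, T > 0 with √α · T < π/2. Suppose v: [0,T] → ℝ is C², v > 0, v(0) = M, v′(0) = 0, and v″(t) + α v(t) > 0 for all t. Then v(t) > M cos(√α · t) for all t ∈ (0, T]. -/
/-! With `w t = cos (√α t)`, which solves `w'' + α w = 0` and stays positive while `√α t < π/2`,
the Wronskian `W = v' w - v w'` has derivative `(v'' + α v) w > 0` and vanishes at `0`, so it is
positive on `(0, T]`. Since `(v / w)' = W / w²`, the quotient `v / w` increases strictly from
its value `M` at `0`. -/

open Real Set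

theorem strictMonoOn_Icc_of_hasDerivAt_pos {f f' : ℝ → ℝ} {a b : ℝ}
    (hf : ∀ x ∈ Icc a b, HasDerivAt f (f' x) x) (hf' : ∀ x ∈ Ioo a b, 0 < f' x) :
    StrictMonoOn f (Icc a b) :=
  strictMonoOn_of_hasDerivWithinAt_pos (convex_Icc a b)
    (fun x hx ↦ (hf x hx).continuousAt.continuousWithinAt)
    (fun x hx ↦ by
      rw [interior_Icc] at hx
      exact (hf x (Ioo_subset_Icc_self hx)).hasDerivWithinAt)
    (fun x hx ↦ by rw [interior_Icc] at hx; exact hf' x hx)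

section Wronskian

variable {v v' v'' w w' w'' : ℝ → ℝ}

theorem hasDerivAt_wronskian {t : ℝ} (hv : HasDerivAt v (v' t) t) (hv' : HasDerivAt v' (v'' t) t)
    (hw : HasDerivAt w (w' t) t) (hw' : HasDerivAt w' (w'' t) t) :
    HasDerivAt (fun x ↦ v' x * w x - v x * w' x) (v'' t * w t - v t * w'' t) t :=
  ((hv'.mul hw).sub (hv.mul hw')).congr_deriv (by ring)

/-- `hgrowth` says that the Wronskian `v' w - v w'` has positive derivative. -/
theorem strictMonoOn_div_of_wronskian {a b : ℝ}
    (hv : ∀ t ∈ Icc a b, HasDerivAt v (v' t) t) (hv' : ∀ t ∈ Icc a b, HasDerivAt v' (v'' t) t)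
    (hw : ∀ t ∈ Icc a b, HasDerivAt w (w' t) t) (hw' : ∀ t ∈ Icc a b, HasDerivAt w' (w'' t) t)
    (hw_ne : ∀ t ∈ Icc a b, w t ≠ 0)
    (hgrowth : ∀ t ∈ Ioo a b, v t * w'' t < v'' t * w t)
    (hstart : v a * w' a ≤ v' a * w a) :
    StrictMonoOn (fun t ↦ v t / w t) (Icc a b) := by
  have hW_mono : StrictMonoOn (fun t ↦ v' t * w t - v t * w' t) (Icc a b) :=
    strictMonoOn_Icc_of_hasDerivAt_pos
      (fun t ht ↦ hasDerivAt_wronskian (hv t ht) (hv' t ht) (hw t ht) (hw' t ht))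
      (fun t ht ↦ sub_pos.2 (hgrowth t ht))
  have hW_pos : ∀ t ∈ Ioo a b, 0 < v' t * w t - v t * w' t := fun t ht ↦ by
    have := hW_mono (left_mem_Icc.2 (ht.1.trans ht.2).le) (Ioo_subset_Icc_self ht) ht.1
    simp only at this
    linarith
  exact strictMonoOn_Icc_of_hasDerivAt_pos (fun t ht ↦ (hv t ht).div (hw t ht) (hw_ne t ht))
    (fun t ht ↦ div_pos (hW_pos t ht) (sq_pos_of_ne_zero (hw_ne t (Ioo_subset_Icc_self ht))))

end Wronskian

theorem hasDerivAt_cos_mul (s t : ℝ) :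
    HasDerivAt (fun x ↦ cos (s * x)) (-(s * sin (s * t))) t := by
  simpa [mul_comm] using ((hasDerivAt_id t).const_mul s).cos

theorem hasDerivAt_neg_mul_sin_mul (s t : ℝ) :
    HasDerivAt (fun x ↦ -(s * sin (s * x))) (-(s ^ 2 * cos (s * t))) t :=
  (((hasDerivAt_id t).const_mul s).sin.const_mul s).neg.congr_deriv (by simp only [id]; ring)

theorem cos_pos_of_mem_Icc {s T t : ℝ} (hs : 0 ≤ s) (hsT : s * T < π / 2) (ht : t ∈ Icc 0 T) :
    0 < cos (s * t) := by
  refine cos_pos_of_mem_Ioo ⟨?_, ?_⟩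
  · linarith [mul_nonneg hs ht.1, pi_pos]
  · linarith [mul_le_mul_of_nonneg_left ht.2 hs]

theorem ode_comparison_general (M α T : ℝ) (hα : 0 < α)
    (hαT : Real.sqrt α * T < Real.pi / 2)
    (v v' v'' : ℝ → ℝ)
    (hd1 : ∀ t ∈ Set.Icc (0 : ℝ) T, HasDerivAt v (v' t) t)
    (hd2 : ∀ t ∈ Set.Icc (0 : ℝ) T, HasDerivAt v' (v'' t) t)
    (hv0 : v 0 = M) (hv'0 : v' 0 = 0)
    (hode : ∀ t ∈ Set.Icc (0 : ℝ) T, 0 < v'' t + α * v t) :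
    ∀ t ∈ Set.Ioc (0 : ℝ) T, M * Real.cos (Real.sqrt α * t) < v t := by
  set s := √α
  have hs2 : s ^ 2 = α := sq_sqrt hα.le
  have hcos : ∀ t ∈ Icc 0 T, 0 < cos (s * t) := fun t ↦ cos_pos_of_mem_Icc (sqrt_nonneg α) hαT
  have hmono := strictMonoOn_div_of_wronskian hd1 hd2
    (fun t _ ↦ hasDerivAt_cos_mul s t) (fun t _ ↦ hasDerivAt_neg_mul_sin_mul s t)
    (fun t ht ↦ (hcos t ht).ne')
    (fun t ht ↦ by
      have := mul_pos (hode t (Ioo_subset_Icc_self ht)) (hcos t (Ioo_subset_Icc_self ht))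
      rw [hs2]
      linarith)
    (by simp [hv'0])
  intro t ht
  have ht' : t ∈ Icc 0 T := Ioc_subset_Icc_self ht
  have hlt := hmono (left_mem_Icc.2 (ht.1.le.trans ht.2)) ht' ht.1
  simp only [mul_zero, cos_zero, div_one, hv0] at hlt
  exact (lt_div_iff₀ (hcos t ht')).1 hlt

/-- ODE comparison: if `v > 0` on `[0,T]`, `v(0) = M`, `v′(0) = 0` and
`v″ + α v > 0` on `[0,T]` with `√α · T < π/2`, then `v(t) > M cos(√α t)` on `(0,T]`. -/
theorem ode_comparison (M α T : ℝ) (hM : 0 < M) (hα : 0 < α) (hT : 0 < T)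
    (hαT : Real.sqrt α * T < Real.pi / 2)
    (v v' v'' : ℝ → ℝ)
    (hd1 : ∀ t ∈ Set.Icc (0 : ℝ) T, HasDerivAt v (v' t) t)
    (hd2 : ∀ t ∈ Set.Icc (0 : ℝ) T, HasDerivAt v' (v'' t) t)
    (hc2 : ContinuousOn v'' (Set.Icc (0 : ℝ) T))
    (hpos : ∀ t ∈ Set.Icc (0 : ℝ) T, 0 < v t)
    (hv0 : v 0 = M) (hv'0 : v' 0 = 0)
    (hode : ∀ t ∈ Set.Icc (0 : ℝ) T, 0 < v'' t + α * v t) :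
    ∀ t ∈ Set.Ioc (0 : ℝ) T, M * Real.cos (Real.sqrt α * t) < v t :=
  ode_comparison_general M α T hα hαT v v' v'' hd1 hd2 hv0 hv'0 hode
end
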